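/- arXiv:1609.05833 — 2 statements merged into one kernel-verified Lean document; each statement's English description precedes it below -/
import Mathlib

section
/- Let E and F be nonzero real vector spaces, (W_i)_{i∈I} a nonempty family of wedges in E and (V_j)_{j∈J} a nonempty family of wedges in F. Then ⋂_{i∈I, j∈J} L_{W_i,V_j}(E,F) is a cone (i.e., its intersection with its negative is {0}) if and only if ∑_{i∈I} W_i is generating in E (i.e., ∑_{i∈I} W_i − ∑_{i∈I} W_i = E) and ⋂_{j∈J} V_j is a cone. -/
/-- A wedge in a real vector space: a nonempty subset closed under addition
and multiplication by nonnegative scalars. -/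
def IsWedge {E : Type*} [AddCommGroup E] [Module ℝ E] (W : Set E) : Prop :=
  W.Nonempty ∧ (∀ x ∈ W, ∀ y ∈ W, x + y ∈ W) ∧ ∀ (c : ℝ), 0 ≤ c → ∀ x ∈ W, c • x ∈ W

/-- `u` is a multi-upper bound of the family `(x i, W i)`. -/
def IsMultiUpperBound {E ι : Type*} [AddCommGroup E] [Module ℝ E]
    (x : ι → E) (W : ι → Set E) (u : E) : Prop :=
  ∀ i, u - x i ∈ W i

/-- `z` is a multi-supremum of the family `(x i, W i)`. -/
def IsMultiSup {E ι : Type*} [AddCommGroup E] [Module ℝ E]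
    (x : ι → E) (W : ι → Set E) (z : E) : Prop :=
  IsMultiUpperBound x W z ∧ ∀ u, IsMultiUpperBound x W u → ∀ i, u - z ∈ W i


/-- `∑_{i ∈ I} W i` : the set of all finite (nonempty) sums of elements of `⋃ i, W i`. -/
def wedgeSum {E ι : Type*} [AddCommGroup E] [Module ℝ E] (W : ι → Set E) : Set E :=
  {x | ∃ l : List E, l ≠ [] ∧ (∀ y ∈ l, y ∈ ⋃ i, W i) ∧ l.sum = x}

open scoped Pointwise

/-!
A linear map `T` lies in the intersection of `⋂ L_{W_i,V_j}` with its negative exactly when it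
maps every `W_i`, hence `∑ W_i`, into the lineality space `C ∩ -C` of `C = ⋂ V_j`, which is a
linear subspace. The only such map is `0` iff `∑ W_i` spans `E` and `C ∩ -C = {0}`: otherwise
`x ↦ f x • v` is a nonzero such map, where either `f ≠ 0` vanishes on the span and `v ≠ 0` is
arbitrary, or `f ≠ 0` is arbitrary and `v ≠ 0` lies in `C ∩ -C`. Finally, a convex cone in a
nontrivial space spans it iff it is reproducing, i.e. `∑ W_i - ∑ W_i = E`.
-/

open Set

section WedgeSum

variable {E ι : Type*} [AddCommGroup E] [Module ℝ E] {W : ι → Set E}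

lemma IsWedge.zero_mem {C : Set E} (hC : IsWedge C) : (0 : E) ∈ C := by
  obtain ⟨x, hx⟩ := hC.1
  simpa using hC.2.2 0 le_rfl x hx

lemma IsWedge.iInter {V : ι → Set E} (hV : ∀ i, IsWedge (V i)) : IsWedge (⋂ i, V i) :=
  ⟨⟨0, mem_iInter.2 fun i => (hV i).zero_mem⟩,
    fun _ hx _ hy => mem_iInter.2 fun i => (hV i).2.1 _ (mem_iInter.1 hx i) _ (mem_iInter.1 hy i),
    fun c hc _ hx => mem_iInter.2 fun i => (hV i).2.2 c hc _ (mem_iInter.1 hx i)⟩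

def IsWedge.toPointedCone {C : Set E} (hC : IsWedge C) : PointedCone ℝ E where
  carrier := C
  add_mem' hx hy := hC.2.1 _ hx _ hy
  zero_mem' := hC.zero_mem
  smul_mem' c _ hx := hC.2.2 c c.2 _ hx

lemma IsWedge.coe_lineal_toPointedCone {C : Set E} (hC : IsWedge C) :
    (hC.toPointedCone.lineal : Set E) = C ∩ -C := by
  ext x
  simp [IsWedge.toPointedCone]

lemma subset_wedgeSum (i : ι) : W i ⊆ wedgeSum W := fun x hx =>
  ⟨[x], List.cons_ne_nil _ _, by simpa using mem_iUnion_of_mem i hx, List.sum_singleton⟩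

lemma wedgeSum_subset_iff {p : AddSubmonoid E} : wedgeSum W ⊆ p ↔ ∀ i, W i ⊆ p := by
  refine ⟨fun h i => (subset_wedgeSum i).trans h, fun h => ?_⟩
  rintro _ ⟨l, -, hl, rfl⟩
  refine p.list_sum_mem fun y hy => ?_
  obtain ⟨i, hi⟩ := mem_iUnion.1 (hl y hy)
  exact h i hi

lemma add_mem_wedgeSum {x y : E} (hx : x ∈ wedgeSum W) (hy : y ∈ wedgeSum W) :
    x + y ∈ wedgeSum W := by
  obtain ⟨l₁, hl₁, hm₁, rfl⟩ := hx
  obtain ⟨l₂, -, hm₂, rfl⟩ := hy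
  refine ⟨l₁ ++ l₂, by simp [hl₁], ?_, List.sum_append⟩
  simpa only [List.mem_append, or_imp, forall_and] using And.intro hm₁ hm₂

lemma smul_mem_wedgeSum (hW : ∀ i, IsWedge (W i)) {c : ℝ} (hc : 0 ≤ c) {x : E}
    (hx : x ∈ wedgeSum W) : c • x ∈ wedgeSum W := by
  obtain ⟨l, hl, hm, rfl⟩ := hx
  refine ⟨l.map (c • ·), by simpa using hl, ?_, List.smul_sum.symm⟩
  simp only [List.mem_map, forall_exists_index, and_imp, forall_apply_eq_imp_iff₂]
  intro y hy
  obtain ⟨i, hi⟩ := mem_iUnion.1 (hm y hy)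
  exact mem_iUnion_of_mem i ((hW i).2.2 c hc y hi)

def wedgeSumCone (hW : ∀ i, IsWedge (W i)) : ConvexCone ℝ E where
  carrier := wedgeSum W
  smul_mem' _ hc _ hx := smul_mem_wedgeSum hW hc.le hx
  add_mem' _ hx _ hy := add_mem_wedgeSum hx hy

end WedgeSum

section LinearMaps

variable {K E F : Type*} [Field K] [AddCommGroup E] [Module K E] [AddCommGroup F] [Module K F]

lemma LinearMap.exists_ne_zero_forall_mem [Nontrivial E] {L : Submodule K F} (hL : L ≠ ⊥) :
    ∃ T : E →ₗ[K] F, T ≠ 0 ∧ ∀ x, T x ∈ L := by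
  obtain ⟨v, hvL, hv⟩ := L.ne_bot_iff.1 hL
  obtain ⟨f, hf⟩ := exists_ne (0 : Module.Dual K E)
  exact ⟨f.smulRight v, by simp [hf, hv], fun x => L.smul_mem (f x) hvL⟩

lemma LinearMap.exists_ne_zero_forall_eq_zero [Nontrivial F] {S : Set E}
    (hS : Submodule.span K S ≠ ⊤) : ∃ T : E →ₗ[K] F, T ≠ 0 ∧ ∀ x ∈ S, T x = 0 := by
  obtain ⟨f, hf, hfS⟩ := Submodule.exists_dual_map_eq_bot_of_lt_top hS.lt_top inferInstance
  obtain ⟨v, hv⟩ := exists_ne (0 : F)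
  refine ⟨f.smulRight v, by simp [hf, hv], fun x hx => ?_⟩
  have : f x = 0 := by
    simpa [hfS] using Submodule.mem_map_of_mem (f := f) (Submodule.subset_span (R := K) hx)
  simp [this]

theorem LinearMap.setOf_mapsTo_eq_singleton_zero_iff [Nontrivial E] [Nontrivial F] {S : Set E}
    {L : Submodule K F} :
    {T : E →ₗ[K] F | MapsTo T S L} = {0} ↔ Submodule.span K S = ⊤ ∧ L = ⊥ := by
  refine ⟨fun h => ⟨?_, ?_⟩, fun ⟨hS, hL⟩ => ?_⟩
  · by_contra hS
    obtain ⟨T, hT, hTS⟩ := exists_ne_zero_forall_eq_zero (F := F) hS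
    have : T ∈ ({0} : Set (E →ₗ[K] F)) := h ▸ fun x hx => by simp [hTS x hx]
    exact hT this
  · by_contra hL
    obtain ⟨T, hT, hTL⟩ := exists_ne_zero_forall_mem (E := E) hL
    have : T ∈ ({0} : Set (E →ₗ[K] F)) := h ▸ fun x _ => hTL x
    exact hT this
  · refine eq_singleton_iff_unique_mem.2 ⟨fun x _ => by simp, fun T hT => ?_⟩
    refine ext_on hS fun x hx => ?_
    simpa [hL] using hT hx

end LinearMaps

lemma iInter_preserving_inter_neg_eq {E F ι κ : Type*} [AddCommGroup E] [Module ℝ E]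
    [AddCommGroup F] [Module ℝ F] (W : ι → Set E) {V : κ → Set F} (hV : ∀ j, IsWedge (V j)) :
    (⋂ i, ⋂ j, {T : E →ₗ[ℝ] F | ∀ x ∈ W i, T x ∈ V j}) ∩
        (-(⋂ i, ⋂ j, {T : E →ₗ[ℝ] F | ∀ x ∈ W i, T x ∈ V j})) =
      {T : E →ₗ[ℝ] F | MapsTo T (wedgeSum W) (IsWedge.iInter hV).toPointedCone.lineal} := by
  ext T
  have hmaps : MapsTo T (wedgeSum W) ((IsWedge.iInter hV).toPointedCone.lineal : Set F) ↔
      ∀ i, ∀ x ∈ W i, T x ∈ (⋂ j, V j) ∩ -⋂ j, V j := by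
    rw [← (IsWedge.iInter hV).coe_lineal_toPointedCone]
    exact wedgeSum_subset_iff
      (p := ((IsWedge.iInter hV).toPointedCone.lineal.comap T).toAddSubmonoid)
  simp only [hmaps, mem_inter_iff, mem_neg, mem_iInter, mem_ofPred_eq, LinearMap.neg_apply]
  grind

theorem stmt_9_general {E F ι κ : Type*} [AddCommGroup E] [Module ℝ E] [AddCommGroup F] [Module ℝ F]
    [Nontrivial E] [Nontrivial F]
    (W : ι → Set E) (V : κ → Set F) (hW : ∀ i, IsWedge (W i)) (hV : ∀ j, IsWedge (V j)) :
    (⋂ i, ⋂ j, {T : E →ₗ[ℝ] F | ∀ x ∈ W i, T x ∈ V j}) ∩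
        (-(⋂ i, ⋂ j, {T : E →ₗ[ℝ] F | ∀ x ∈ W i, T x ∈ V j})) = {0} ↔
      wedgeSum W - wedgeSum W = Set.univ ∧ (⋂ j, V j) ∩ (-(⋂ j, V j)) = {0} := by
  rw [iInter_preserving_inter_neg_eq W hV, LinearMap.setOf_mapsTo_eq_singleton_zero_iff,
    ← (IsWedge.iInter hV).coe_lineal_toPointedCone, ← Submodule.bot_coe (R := ℝ),
    SetLike.coe_set_eq]
  exact and_congr_left' (ConvexCone.span_eq_top_iff_isReproducing (C := wedgeSumCone hW))

theorem stmt_9 {E F ι κ : Type*} [AddCommGroup E] [Module ℝ E] [AddCommGroup F] [Module ℝ F]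
    [Nontrivial E] [Nontrivial F] [Nonempty ι] [Nonempty κ]
    (W : ι → Set E) (V : κ → Set F) (hW : ∀ i, IsWedge (W i)) (hV : ∀ j, IsWedge (V j)) :
    (⋂ i, ⋂ j, {T : E →ₗ[ℝ] F | ∀ x ∈ W i, T x ∈ V j}) ∩
        (-(⋂ i, ⋂ j, {T : E →ₗ[ℝ] F | ∀ x ∈ W i, T x ∈ V j})) = {0} ↔
      wedgeSum W - wedgeSum W = Set.univ ∧ (⋂ j, V j) ∩ (-(⋂ j, V j)) = {0} :=
  stmt_9_general W V hW hV
end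

section
/- Let E be a real vector space with a nonempty collection 𝒲 of wedges having the (2,n)-Riesz decomposition property for every n ∈ ℕ. Let F be a real vector space partially ordered by a cone V such that every nonempty subset of F that is bounded above has a supremum. Let (T_i)_{i∈I} be linear maps E → F and (W_i)_{i∈I} wedges in 𝒲 such that ∑_{i∈I} W_i is generating in E and there exists a linear map S : E → F with (S − T_i)(W_i) ⊆ V for all i ∈ I. Then the family (T_i, L_{W_i,V}(E,F))_{i∈I} has a unique multi-supremum R in L(E,F), and for every x ∈ ∑_{i∈I} W_i, R(x) = sup { ∑_{i∈I} T_i(y_i) : y_i ∈ W_i for all i, only finitely many y_i nonzero, ∑_{i∈I} y_i = x }, the supremum taken in the partial order induced by V. -/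
/-- The collection `𝒲` of wedges has the (2,n)-Riesz decomposition property for every
`n ∈ ℕ`: for every finite collection `(W j)` of wedges from `𝒲`, whenever
`x₁, x₂ ∈ ∑ j, W j` and `y j ∈ W j` satisfy `x₁ + x₂ = ∑ j, y j`, there is a
decomposition `z₁ j, z₂ j ∈ W j` with `x₁ = ∑ j, z₁ j`, `x₂ = ∑ j, z₂ j` and
`y j = z₁ j + z₂ j` for all `j`. -/
def HasRDP2 {E : Type*} [AddCommGroup E] [Module ℝ E] (𝒲 : Set (Set E)) : Prop :=
  ∀ (n : ℕ) (W : Fin n → Set E), (∀ j, W j ∈ 𝒲) →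
    ∀ x₁ x₂ : E, x₁ ∈ wedgeSum W → x₂ ∈ wedgeSum W →
    ∀ y : Fin n → E, (∀ j, y j ∈ W j) → x₁ + x₂ = ∑ j, y j →
    ∃ z₁ z₂ : Fin n → E, (∀ j, z₁ j ∈ W j) ∧ (∀ j, z₂ j ∈ W j) ∧
      x₁ = ∑ j, z₁ j ∧ x₂ = ∑ j, z₂ j ∧ ∀ j, y j = z₁ j + z₂ j

open scoped Pointwise

/-!
For `x ∈ ∑ W i` let `D x` be the set of values `∑ T i (y i)` over the decompositions
`x = ∑ y i` with `y i ∈ W i`. It is bounded above by `S x`, so it has a supremum `r x`. The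
Riesz decomposition property gives `D (x₁ + x₂) = D x₁ + D x₂`, and `D (c • x) = c • D x` for
`c > 0`, so `r` is additive and positively homogeneous on the generating wedge `∑ W i` and
extends to a linear map `R`. A linear map `U` dominates `T i` on `W i` for every `i` iff `U x`
dominates `D x` for every `x`, so `R` is a multi-supremum. It is unique because a linear map
that is both `≥ 0` and `≤ 0` on every `W i` vanishes on the generating wedge `∑ W i`.
-/

namespace IsWedge

variable {E : Type*} [AddCommGroup E] [Module ℝ E] {W : Set E}

theorem add_mem (hW : IsWedge W) {x y : E} (hx : x ∈ W) (hy : y ∈ W) : x + y ∈ W :=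
  hW.2.1 x hx y hy

theorem smul_mem (hW : IsWedge W) {c : ℝ} (hc : 0 ≤ c) {x : E} (hx : x ∈ W) : c • x ∈ W :=
  hW.2.2 c hc x hx

theorem zero_mem_s15 (hW : IsWedge W) : (0 : E) ∈ W := by
  obtain ⟨x, hx⟩ := hW.1
  simpa using hW.smul_mem le_rfl hx

theorem sum_mem (hW : IsWedge W) {κ : Type*} {s : Finset κ} {f : κ → E}
    (hf : ∀ j ∈ s, f j ∈ W) : ∑ j ∈ s, f j ∈ W :=
  Finset.sum_induction f (· ∈ W) (fun _ _ => hW.add_mem) hW.zero_mem_s15 hf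

end IsWedge

theorem eq_zero_of_mem_of_neg_mem {F : Type*} [AddCommGroup F] {V : Set F}
    (hcone : V ∩ -V = {0}) {a : F} (ha : a ∈ V) (hna : -a ∈ V) : a = 0 := by
  have : a ∈ V ∩ -V := ⟨ha, hna⟩
  rwa [hcone] at this

theorem IsMultiSup.unique {E ι : Type*} [AddCommGroup E] [Module ℝ E] {x : ι → E}
    {U : ι → Set E} (hU : ∀ d, (∀ i, d ∈ U i) → (∀ i, -d ∈ U i) → d = 0) {z z' : E}
    (hz : IsMultiSup x U z) (hz' : IsMultiSup x U z') : z = z' := by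
  refine (sub_eq_zero.1 (hU (z' - z) (hz.2 z' hz'.1) fun i => ?_)).symm
  simpa using hz'.2 z hz.1 i

section Sup

variable {F : Type*} [AddCommGroup F] {V A B : Set F} {a b z z' : F}

def IsSupWrt (V A : Set F) (z : F) : Prop :=
  (∀ a ∈ A, z - a ∈ V) ∧ ∀ u, (∀ a ∈ A, u - a ∈ V) → u - z ∈ V

theorem IsSupWrt.unique (hcone : V ∩ -V = {0}) (hz : IsSupWrt V A z) (hz' : IsSupWrt V A z') :
    z = z' :=
  sub_eq_zero.1 (eq_zero_of_mem_of_neg_mem hcone (hz'.2 z hz.1) (by simpa using hz.2 z' hz'.1))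

theorem IsSupWrt.add [Module ℝ F] (hV : IsWedge V) (ha : IsSupWrt V A a) (hb : IsSupWrt V B b) :
    IsSupWrt V (A + B) (a + b) := by
  refine ⟨?_, fun u hu => ?_⟩
  · rintro _ ⟨a', ha', b', hb', rfl⟩
    simpa [add_sub_add_comm] using hV.add_mem (ha.1 a' ha') (hb.1 b' hb')
  · have hub : ∀ a' ∈ A, u - b - a' ∈ V := fun a' ha' => by
      simpa [sub_right_comm] using hb.2 (u - a') fun b' hb' => by
        simpa [sub_sub] using hu _ (Set.add_mem_add ha' hb')
    simpa [sub_sub, add_comm] using ha.2 _ hub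

theorem IsSupWrt.smul [Module ℝ F] (hV : IsWedge V) {c : ℝ} (hc : 0 < c) (hz : IsSupWrt V A z) :
    IsSupWrt V (c • A) (c • z) := by
  refine ⟨?_, fun u hu => ?_⟩
  · rintro _ ⟨a, ha, rfl⟩
    simpa [smul_sub] using hV.smul_mem hc.le (hz.1 a ha)
  · have hub : ∀ a ∈ A, c⁻¹ • u - a ∈ V := fun a ha => by
      simpa [smul_sub, hc.ne'] using
        hV.smul_mem (inv_nonneg.2 hc.le) (hu _ (Set.smul_mem_smul_set ha))
    simpa [smul_sub, hc.ne'] using hV.smul_mem hc.le (hz.2 _ hub)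

end Sup

section Extension

variable {E F : Type*} [AddCommGroup E] [Module ℝ E] [AddCommGroup F] [Module ℝ F]

theorem LinearMap.ext_of_sub_eq_univ {K : Set E} (hgen : K - K = Set.univ) {f g : E →ₗ[ℝ] F}
    (h : Set.EqOn f g K) : f = g := by
  ext x
  obtain ⟨p, hp, q, hq, rfl⟩ : x ∈ K - K := hgen ▸ Set.mem_univ x
  simp [h hp, h hq]

theorem IsWedge.exists_linearMap_eqOn {K : Set E} (hK : IsWedge K) (hgen : K - K = Set.univ)
    (r : E → F) (hadd : ∀ x ∈ K, ∀ y ∈ K, r (x + y) = r x + r y)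
    (hsmul : ∀ c : ℝ, 0 < c → ∀ x ∈ K, r (c • x) = c • r x) :
    ∃ R : E →ₗ[ℝ] F, Set.EqOn R r K := by
  have hdiff : ∀ x, ∃ p ∈ K, ∃ q ∈ K, p - q = x := fun x => Set.mem_sub.1 (hgen ▸ Set.mem_univ x)
  choose P hP Q hQ hPQ using hdiff
  -- `r p - r q` only depends on `p - q`, since `r` is additive on `K`
  have hwd : ∀ x, ∀ p ∈ K, ∀ q ∈ K, p - q = x → r (P x) - r (Q x) = r p - r q := by
    intro x p hp q hq hx
    rw [sub_eq_sub_iff_add_eq_add, ← hadd _ (hP x) _ hq, ← hadd _ hp _ (hQ x),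
      sub_eq_sub_iff_add_eq_add.1 ((hPQ x).trans hx.symm)]
  have hr0 : r 0 = 0 := by simpa using hadd 0 hK.zero_mem_s15 0 hK.zero_mem_s15
  have hsmul₀ : ∀ c : ℝ, 0 ≤ c → ∀ x ∈ K, r (c • x) = c • r x := by
    intro c hc x hx
    rcases hc.eq_or_lt with rfl | hc
    · simp [hr0]
    · exact hsmul c hc x hx
  have map_add : ∀ x y,
      r (P (x + y)) - r (Q (x + y)) = r (P x) - r (Q x) + (r (P y) - r (Q y)) := by
    intro x y
    rw [hwd (x + y) _ (hK.add_mem (hP x) (hP y)) _ (hK.add_mem (hQ x) (hQ y))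
      (by rw [add_sub_add_comm, hPQ, hPQ]), hadd _ (hP x) _ (hP y), hadd _ (hQ x) _ (hQ y)]
    abel
  have map_smul : ∀ (c : ℝ) x, r (P (c • x)) - r (Q (c • x)) = c • (r (P x) - r (Q x)) := by
    intro c x
    rcases le_or_gt 0 c with hc | hc
    · rw [hwd (c • x) _ (hK.smul_mem hc (hP x)) _ (hK.smul_mem hc (hQ x))
        (by rw [← smul_sub, hPQ]), hsmul₀ c hc _ (hP x), hsmul₀ c hc _ (hQ x), smul_sub]
    · have hc' : 0 ≤ -c := by linarith
      rw [hwd (c • x) _ (hK.smul_mem hc' (hQ x)) _ (hK.smul_mem hc' (hP x))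
        (by rw [← smul_sub, neg_smul, ← smul_neg, neg_sub, hPQ]), hsmul₀ _ hc' _ (hQ x),
        hsmul₀ _ hc' _ (hP x), ← smul_sub, neg_smul, ← smul_neg, neg_sub]
  refine ⟨⟨⟨fun x => r (P x) - r (Q x), map_add⟩, map_smul⟩, fun x hx => ?_⟩
  change r (P x) - r (Q x) = r x
  rw [hwd x x hx 0 hK.zero_mem_s15 (sub_zero x), hr0, sub_zero]

end Extension

theorem wedgeSum_comp_equiv {E κ κ' : Type*} [AddCommGroup E] [Module ℝ E] (W : κ → Set E)
    (e : κ' ≃ κ) : wedgeSum (W ∘ e) = wedgeSum W := by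
  simp only [wedgeSum, Function.comp_apply, e.surjective.iUnion_comp W]

theorem sum_mem_wedgeSum {E κ : Type*} [AddCommGroup E] [Module ℝ E] [Fintype κ] [Nonempty κ]
    {W : κ → Set E} {z : κ → E} (hz : ∀ j, z j ∈ W j) : ∑ j, z j ∈ wedgeSum W :=
  ⟨Finset.univ.toList.map z, by simp [Finset.univ_nonempty.ne_empty],
    by simpa using fun j => Set.mem_iUnion.2 ⟨j, hz j⟩, Finset.sum_map_toList _ _⟩

namespace HasRDP2

variable {E ι : Type*} [AddCommGroup E] [Module ℝ E] {𝒲 : Set (Set E)}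

theorem fintype (hRDP : HasRDP2 𝒲) {κ : Type*} [Fintype κ] (W : κ → Set E)
    (hW : ∀ j, W j ∈ 𝒲) {x₁ x₂ : E} (hx₁ : x₁ ∈ wedgeSum W) (hx₂ : x₂ ∈ wedgeSum W)
    (y : κ → E) (hy : ∀ j, y j ∈ W j) (hsum : x₁ + x₂ = ∑ j, y j) :
    ∃ z₁ z₂ : κ → E, (∀ j, z₁ j ∈ W j) ∧ (∀ j, z₂ j ∈ W j) ∧
      x₁ = ∑ j, z₁ j ∧ x₂ = ∑ j, z₂ j ∧ ∀ j, y j = z₁ j + z₂ j := by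
  let e := (Fintype.equivFin κ).symm
  obtain ⟨z₁, z₂, hz₁, hz₂, h₁, h₂, hy'⟩ := hRDP _ (W ∘ e) (fun j => hW _) x₁ x₂
    (by rwa [wedgeSum_comp_equiv]) (by rwa [wedgeSum_comp_equiv]) (y ∘ e) (fun j => hy _)
    (by rw [hsum]; exact (e.sum_comp y).symm)
  refine ⟨z₁ ∘ e.symm, z₂ ∘ e.symm, fun j => by simpa using hz₁ (e.symm j),
    fun j => by simpa using hz₂ (e.symm j), h₁.trans (e.symm.sum_comp z₁).symm,
    h₂.trans (e.symm.sum_comp z₂).symm, fun j => by simpa using hy' (e.symm j)⟩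

theorem exists_finsupp_split (hRDP : HasRDP2 𝒲) {W : ι → Set E} (hW𝒲 : ∀ i, W i ∈ 𝒲)
    (hW : ∀ i, IsWedge (W i)) {y₁ y₂ y : ι →₀ E} (hy₁ : ∀ i, y₁ i ∈ W i)
    (hy₂ : ∀ i, y₂ i ∈ W i) (hy : ∀ i, y i ∈ W i)
    (hsum : ((y₁.sum fun _ v => v) + y₂.sum fun _ v => v) = y.sum fun _ v => v) :
    ∃ z₁ z₂ : ι →₀ E, (∀ i, z₁ i ∈ W i) ∧ (∀ i, z₂ i ∈ W i) ∧
      (z₁.sum fun _ v => v) = (y₁.sum fun _ v => v) ∧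
      (z₂.sum fun _ v => v) = (y₂.sum fun _ v => v) ∧ z₁ + z₂ = y := by
  classical
  -- `HasRDP2` is applied to the finite subfamily indexed by `s`; the supports of `y₁` and `y₂`
  -- are included so that both summands lie in the wedge sum of that subfamily
  set s := y₁.support ∪ y₂.support ∪ y.support
  rcases s.eq_empty_or_nonempty with hs | hs
  · simp only [s, Finset.union_eq_empty, Finsupp.support_eq_empty] at hs
    obtain ⟨⟨rfl, rfl⟩, rfl⟩ := hs
    exact ⟨0, 0, hy₁, hy₂, rfl, rfl, add_zero 0⟩
  have := hs.coe_sort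
  have hsum_s : ∀ z : ι →₀ E, z.support ⊆ s → (z.sum fun _ v => v) = ∑ j : s, z j :=
    fun z hz => (z.sum_of_support_subset hz _ fun _ _ => rfl).trans (s.sum_coe_sort z).symm
  have hy₁s : y₁.support ⊆ s := fun i hi => by simp [s, hi]
  have hy₂s : y₂.support ⊆ s := fun i hi => by simp [s, hi]
  have hys : y.support ⊆ s := fun i hi => by simp [s, hi]
  obtain ⟨z₁, z₂, hz₁, hz₂, h₁, h₂, hz⟩ := hRDP.fintype (fun j : s => W j) (fun j => hW𝒲 j)
    (sum_mem_wedgeSum fun j : s => hy₁ j) (sum_mem_wedgeSum fun j : s => hy₂ j)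
    (fun j => y j) (fun j => hy j)
    (by rw [← hsum_s y₁ hy₁s, ← hsum_s y₂ hy₂s, ← hsum_s y hys, hsum])
  let lift (z : s → E) : ι →₀ E := Finsupp.indicator s fun i hi => z ⟨i, hi⟩
  have lift_mem : ∀ z : s → E, (∀ j : s, z j ∈ W j) → ∀ i, lift z i ∈ W i := by
    intro z hz i
    by_cases hi : i ∈ s
    · simpa [lift, Finsupp.indicator_of_mem hi] using hz ⟨i, hi⟩
    · simpa [lift, Finsupp.indicator_of_notMem hi] using (hW i).zero_mem_s15
  have lift_sum : ∀ z : s → E, ((lift z).sum fun _ v => v) = ∑ j, z j := by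
    intro z
    rw [hsum_s _ (Finsupp.support_indicator_subset _ _)]
    simp
  refine ⟨lift z₁, lift z₂, lift_mem z₁ hz₁, lift_mem z₂ hz₂,
    by rw [lift_sum, ← h₁, hsum_s y₁ hy₁s], by rw [lift_sum, ← h₂, hsum_s y₂ hy₂s], ?_⟩
  ext i
  by_cases hi : i ∈ s
  · simp [lift, Finsupp.indicator_of_mem hi, hz ⟨i, hi⟩]
  · simp [lift, Finsupp.indicator_of_notMem hi, Finsupp.notMem_support_iff.1 fun h => hi (hys h)]

end HasRDP2

section DecompValues

variable {E F ι : Type*} [AddCommGroup E] [Module ℝ E] [AddCommGroup F] [Module ℝ F]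
  {T : ι → E →ₗ[ℝ] F} {W : ι → Set E}

def decompValues (T : ι → E →ₗ[ℝ] F) (W : ι → Set E) (x : E) : Set F :=
  {f | ∃ y : ι →₀ E, (∀ i, y i ∈ W i) ∧ (y.sum fun _ v => v) = x ∧ f = y.sum fun i v => (T i) v}

theorem zero_mem_decompValues (hW : ∀ i, IsWedge (W i)) : (0 : F) ∈ decompValues T W 0 :=
  ⟨0, fun i => (hW i).zero_mem_s15, by simp, by simp⟩

theorem apply_mem_decompValues (hW : ∀ i, IsWedge (W i)) {i : ι} {x : E} (hx : x ∈ W i) :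
    T i x ∈ decompValues T W x := by
  classical
  refine ⟨Finsupp.single i x, fun j => ?_, Finsupp.sum_single_index rfl, by simp⟩
  rw [Finsupp.single_apply]
  split_ifs with h
  · exact h ▸ hx
  · exact (hW j).zero_mem_s15

theorem add_mem_decompValues (hW : ∀ i, IsWedge (W i)) {x₁ x₂ : E} {f₁ f₂ : F}
    (hf₁ : f₁ ∈ decompValues T W x₁) (hf₂ : f₂ ∈ decompValues T W x₂) :
    f₁ + f₂ ∈ decompValues T W (x₁ + x₂) := by
  obtain ⟨y₁, hy₁, rfl, rfl⟩ := hf₁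
  obtain ⟨y₂, hy₂, rfl, rfl⟩ := hf₂
  exact ⟨y₁ + y₂, fun i => (hW i).add_mem (hy₁ i) (hy₂ i),
    Finsupp.sum_add_index' (fun _ => rfl) fun _ _ _ => rfl,
    (Finsupp.sum_add_index' (fun i => map_zero (T i)) fun i => map_add (T i)).symm⟩

theorem smul_mem_decompValues (hW : ∀ i, IsWedge (W i)) {c : ℝ} (hc : 0 ≤ c) {x : E} {f : F}
    (hf : f ∈ decompValues T W x) : c • f ∈ decompValues T W (c • x) := by
  obtain ⟨y, hy, rfl, rfl⟩ := hf
  refine ⟨c • y, fun i => (hW i).smul_mem hc (hy i), ?_, ?_⟩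
  · rw [Finsupp.sum_smul_index' fun _ => rfl, Finsupp.smul_sum]
  · simp only [Finsupp.sum_smul_index' fun i => map_zero (T i), Finsupp.smul_sum, map_smul]

theorem decompValues_nonempty_of_mem_wedgeSum (hW : ∀ i, IsWedge (W i)) {x : E}
    (hx : x ∈ wedgeSum W) : (decompValues T W x).Nonempty := by
  obtain ⟨l, -, hl, rfl⟩ := hx
  induction l with
  | nil => exact ⟨0, zero_mem_decompValues hW⟩
  | cons a l ih =>
    obtain ⟨i, ha⟩ := Set.mem_iUnion.1 (hl a List.mem_cons_self)
    obtain ⟨f, hf⟩ := ih fun b hb => hl b (List.mem_cons_of_mem a hb)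
    rw [List.sum_cons]
    exact ⟨_, add_mem_decompValues hW (apply_mem_decompValues hW ha) hf⟩

theorem decompValues_smul (hW : ∀ i, IsWedge (W i)) {c : ℝ} (hc : 0 < c) (x : E) :
    decompValues T W (c • x) = c • decompValues T W x := by
  refine Set.Subset.antisymm (fun f hf => ⟨c⁻¹ • f, ?_, smul_inv_smul₀ hc.ne' f⟩)
    (Set.smul_set_subset_iff.2 fun f hf => smul_mem_decompValues hW hc.le hf)
  simpa [hc.ne'] using smul_mem_decompValues hW (inv_nonneg.2 hc.le) hf

theorem decompValues_add {𝒲 : Set (Set E)} (hRDP : HasRDP2 𝒲) (hW𝒲 : ∀ i, W i ∈ 𝒲)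
    (hW : ∀ i, IsWedge (W i)) {x₁ x₂ : E} (hx₁ : (decompValues T W x₁).Nonempty)
    (hx₂ : (decompValues T W x₂).Nonempty) :
    decompValues T W (x₁ + x₂) = decompValues T W x₁ + decompValues T W x₂ := by
  refine Set.Subset.antisymm ?_
    (Set.add_subset_iff.2 fun f₁ hf₁ f₂ hf₂ => add_mem_decompValues hW hf₁ hf₂)
  rintro _ ⟨y, hy, hysum, rfl⟩
  obtain ⟨_, y₁, hy₁, rfl, -⟩ := hx₁
  obtain ⟨_, y₂, hy₂, rfl, -⟩ := hx₂
  obtain ⟨z₁, z₂, hz₁, hz₂, h₁, h₂, rfl⟩ := hRDP.exists_finsupp_split hW𝒲 hW hy₁ hy₂ hy hysum.symm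
  exact ⟨_, ⟨z₁, hz₁, h₁, rfl⟩, _, ⟨z₂, hz₂, h₂, rfl⟩,
    (Finsupp.sum_add_index' (fun i => map_zero (T i)) fun i => map_add (T i)).symm⟩

theorem sub_mem_of_mem_decompValues {V : Set F} (hV : IsWedge V) {U : E →ₗ[ℝ] F}
    (hU : ∀ i, ∀ x ∈ W i, (U - T i) x ∈ V) {x : E} {f : F} (hf : f ∈ decompValues T W x) :
    U x - f ∈ V := by
  obtain ⟨y, hy, rfl, rfl⟩ := hf
  rw [map_finsuppSum, ← Finsupp.sum_sub]
  exact hV.sum_mem fun i _ => hU i _ (hy i)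

end DecompValues

section MultiSup

variable {E F ι : Type*} [AddCommGroup E] [Module ℝ E] [AddCommGroup F] [Module ℝ F]
  {T : ι → E →ₗ[ℝ] F} {W : ι → Set E} {V : Set F}

theorem exists_linearMap_isSupWrt_decompValues {𝒲 : Set (Set E)} (hRDP : HasRDP2 𝒲)
    (hW𝒲 : ∀ i, W i ∈ 𝒲) (hW : ∀ i, IsWedge (W i)) (hV : IsWedge V) (hcone : V ∩ -V = {0})
    (hDC : ∀ A : Set F, A.Nonempty → (∃ u, ∀ a ∈ A, u - a ∈ V) →
      ∃ z, (∀ a ∈ A, z - a ∈ V) ∧ ∀ u, (∀ a ∈ A, u - a ∈ V) → u - z ∈ V)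
    (hgen : wedgeSum W - wedgeSum W = Set.univ)
    (S : E →ₗ[ℝ] F) (hS : ∀ i, ∀ x ∈ W i, (S - T i) x ∈ V) :
    ∃ R : E →ₗ[ℝ] F, ∀ x, (decompValues T W x).Nonempty →
      IsSupWrt V (decompValues T W x) (R x) := by
  set K := {x | (decompValues T W x).Nonempty}
  have hK : IsWedge K := ⟨⟨0, 0, zero_mem_decompValues hW⟩,
    fun _ ⟨f, hf⟩ _ ⟨g, hg⟩ => ⟨f + g, add_mem_decompValues hW hf hg⟩,
    fun _ hc _ ⟨f, hf⟩ => ⟨_, smul_mem_decompValues hW hc hf⟩⟩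
  have hKgen : K - K = Set.univ := by
    have hsub : wedgeSum W ⊆ K := fun x hx => decompValues_nonempty_of_mem_wedgeSum hW hx
    exact Set.eq_univ_of_univ_subset (hgen ▸ Set.sub_subset_sub hsub hsub)
  have hsup : ∀ x, ∃ z, x ∈ K → IsSupWrt V (decompValues T W x) z := by
    intro x
    by_cases hx : x ∈ K
    · obtain ⟨z, hz⟩ := hDC _ hx ⟨S x, fun f hf => sub_mem_of_mem_decompValues hV hS hf⟩
      exact ⟨z, fun _ => hz⟩
    · exact ⟨0, fun h => absurd h hx⟩
  choose r hr using hsup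
  obtain ⟨R, hR⟩ := hK.exists_linearMap_eqOn hKgen r
    (fun x hx y hy => (hr _ (hK.add_mem hx hy)).unique hcone <| by
      rw [decompValues_add hRDP hW𝒲 hW hx hy]
      exact (hr x hx).add hV (hr y hy))
    (fun c hc x hx => (hr _ (hK.smul_mem hc.le hx)).unique hcone <| by
      rw [decompValues_smul hW hc]
      exact (hr x hx).smul hV hc)
  exact ⟨R, fun x hx => hR hx ▸ hr x hx⟩

theorem isMultiSup_of_isSupWrt_decompValues (hW : ∀ i, IsWedge (W i)) (hV : IsWedge V)
    {R : E →ₗ[ℝ] F} (hR : ∀ x, (decompValues T W x).Nonempty →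
      IsSupWrt V (decompValues T W x) (R x)) :
    IsMultiSup T (fun i => {U : E →ₗ[ℝ] F | ∀ x ∈ W i, U x ∈ V}) R :=
  ⟨fun _ _ hx => (hR _ ⟨_, apply_mem_decompValues hW hx⟩).1 _ (apply_mem_decompValues hW hx),
    fun _ hU _ _ hx => (hR _ ⟨_, apply_mem_decompValues hW hx⟩).2 _
      fun _ hf => sub_mem_of_mem_decompValues hV hU hf⟩

theorem LinearMap.eq_zero_of_mem_of_neg_mem_on_wedges (hcone : V ∩ -V = {0})
    (hgen : wedgeSum W - wedgeSum W = Set.univ) {U : E →ₗ[ℝ] F}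
    (h₁ : ∀ i, ∀ x ∈ W i, U x ∈ V) (h₂ : ∀ i, ∀ x ∈ W i, (-U) x ∈ V) : U = 0 := by
  refine LinearMap.ext_of_sub_eq_univ hgen ?_
  rintro _ ⟨l, -, hl, rfl⟩
  rw [map_list_sum, LinearMap.zero_apply]
  refine List.sum_eq_zero fun a ha => ?_
  obtain ⟨b, hb, rfl⟩ := List.mem_map.1 ha
  obtain ⟨i, hi⟩ := Set.mem_iUnion.1 (hl b hb)
  exact eq_zero_of_mem_of_neg_mem hcone (h₁ i b hi) (h₂ i b hi)

end MultiSup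

theorem stmt_15_general {E F ι : Type*} [AddCommGroup E] [Module ℝ E] [AddCommGroup F] [Module ℝ F]
    (𝒲 : Set (Set E)) (h𝒲 : ∀ W ∈ 𝒲, IsWedge W)
    (hRDP : HasRDP2 𝒲)
    (V : Set F) (hV : IsWedge V) (hcone : V ∩ (-V) = {0})
    (hDC : ∀ A : Set F, A.Nonempty → (∃ u, ∀ a ∈ A, u - a ∈ V) →
      ∃ z, (∀ a ∈ A, z - a ∈ V) ∧ ∀ u, (∀ a ∈ A, u - a ∈ V) → u - z ∈ V)
    (T : ι → E →ₗ[ℝ] F) (W : ι → Set E) (hWi : ∀ i, W i ∈ 𝒲)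
    (hgen : wedgeSum W - wedgeSum W = Set.univ)
    (S : E →ₗ[ℝ] F) (hS : ∀ i, ∀ x ∈ W i, (S - T i) x ∈ V) :
    (∃! R : E →ₗ[ℝ] F,
      IsMultiSup T (fun i => {U : E →ₗ[ℝ] F | ∀ x ∈ W i, U x ∈ V}) R) ∧
    ∀ R : E →ₗ[ℝ] F,
      IsMultiSup T (fun i => {U : E →ₗ[ℝ] F | ∀ x ∈ W i, U x ∈ V}) R →
      ∀ x ∈ wedgeSum W,
        (∀ f ∈ {f : F | ∃ y : ι →₀ E, (∀ i, y i ∈ W i) ∧ (y.sum fun _ v => v) = x ∧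
            f = y.sum fun i v => (T i) v}, R x - f ∈ V) ∧
        (∀ u : F, (∀ f ∈ {f : F | ∃ y : ι →₀ E, (∀ i, y i ∈ W i) ∧ (y.sum fun _ v => v) = x ∧
            f = y.sum fun i v => (T i) v}, u - f ∈ V) → u - R x ∈ V) := by
  have hW : ∀ i, IsWedge (W i) := fun i => h𝒲 _ (hWi i)
  obtain ⟨R, hR⟩ := exists_linearMap_isSupWrt_decompValues hRDP hWi hW hV hcone hDC hgen S hS
  have hRsup := isMultiSup_of_isSupWrt_decompValues hW hV hR
  have huniq : ∀ R', IsMultiSup T (fun i => {U : E →ₗ[ℝ] F | ∀ x ∈ W i, U x ∈ V}) R' → R' = R :=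
    fun R' hR' => hR'.unique (fun _ h₁ h₂ =>
      LinearMap.eq_zero_of_mem_of_neg_mem_on_wedges hcone hgen h₁ h₂) hRsup
  refine ⟨⟨R, hRsup, huniq⟩, fun R' hR' x hx => ?_⟩
  rw [huniq R' hR']
  exact hR x (decompValues_nonempty_of_mem_wedgeSum hW hx)

theorem stmt_15 {E F ι : Type*} [AddCommGroup E] [Module ℝ E] [AddCommGroup F] [Module ℝ F]
    (𝒲 : Set (Set E)) (h𝒲ne : 𝒲.Nonempty) (h𝒲 : ∀ W ∈ 𝒲, IsWedge W)
    (hRDP : HasRDP2 𝒲)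
    (V : Set F) (hV : IsWedge V) (hcone : V ∩ (-V) = {0})
    (hDC : ∀ A : Set F, A.Nonempty → (∃ u, ∀ a ∈ A, u - a ∈ V) →
      ∃ z, (∀ a ∈ A, z - a ∈ V) ∧ ∀ u, (∀ a ∈ A, u - a ∈ V) → u - z ∈ V)
    (T : ι → E →ₗ[ℝ] F) (W : ι → Set E) (hWi : ∀ i, W i ∈ 𝒲)
    (hgen : wedgeSum W - wedgeSum W = Set.univ)
    (S : E →ₗ[ℝ] F) (hS : ∀ i, ∀ x ∈ W i, (S - T i) x ∈ V) :
    (∃! R : E →ₗ[ℝ] F,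
      IsMultiSup T (fun i => {U : E →ₗ[ℝ] F | ∀ x ∈ W i, U x ∈ V}) R) ∧
    ∀ R : E →ₗ[ℝ] F,
      IsMultiSup T (fun i => {U : E →ₗ[ℝ] F | ∀ x ∈ W i, U x ∈ V}) R →
      ∀ x ∈ wedgeSum W,
        (∀ f ∈ {f : F | ∃ y : ι →₀ E, (∀ i, y i ∈ W i) ∧ (y.sum fun _ v => v) = x ∧
            f = y.sum fun i v => (T i) v}, R x - f ∈ V) ∧
        (∀ u : F, (∀ f ∈ {f : F | ∃ y : ι →₀ E, (∀ i, y i ∈ W i) ∧ (y.sum fun _ v => v) = x ∧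
            f = y.sum fun i v => (T i) v}, u - f ∈ V) → u - R x ∈ V) :=
  stmt_15_general 𝒲 h𝒲 hRDP V hV hcone hDC T W hWi hgen S hS
end
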